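/- Let (X, m) be a measure space, H a separable real Hilbert space, 1 < p < ∞, E a real normed space, T : E → L^p(m; H) a continuous linear operator, and S ⊆ E a linear subspace. Suppose u ∈ E satisfies ∫_X ‖(Tu)(x)‖_H^p m(dx) ≤ ∫_X ‖(T(u + φ))(x)‖_H^p m(dx) for all φ ∈ S. Then for every φ ∈ S one has ∫_X ‖(Tu)(x)‖_H^{p−2} ⟨(Tu)(x), (Tφ)(x)⟩_H m(dx) = 0, where the integrand is interpreted as 0 at points x with (Tu)(x) = 0. -/

import Mathlib

/-!
Along the line `t ↦ u + t • φ` the energy `t ↦ ∫ ‖T u x + t • T φ x‖ ^ p` is minimal at `t = 0`.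
It is differentiable there by differentiation under the integral sign: the derivative of `‖·‖ ^ p`
at `v` is `p ‖v‖ ^ (p - 2) ⟪v, ·⟫`, and on `|t| < 1` the derivatives of the integrand are dominated
by `p (‖T u‖ + ‖T φ‖) ^ (p - 1) ‖T φ‖`, which is integrable by Hölder's inequality with the
exponents `p / (p - 1)` and `p`. Fermat's rule then says that the derivative at `0`, which is `p`
times the integral of the statement, vanishes.
-/

open MeasureTheory Filter Metric
open scoped Classical ENNReal RealInnerProductSpace

section NormRpow

variable {H : Type*} [NormedAddCommGroup H] [InnerProductSpace ℝ H]

theorem hasDerivAt_norm_add_smul_rpow {p : ℝ} (hp : 1 < p) (v w : H) (t : ℝ) :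
    HasDerivAt (fun s : ℝ => ‖v + s • w‖ ^ p)
      (p * (‖v + t • w‖ ^ (p - 2) * ⟪v + t • w, w⟫)) t := by
  have hline : HasDerivAt (fun s : ℝ => v + s • w) w t := by
    simpa using ((hasDerivAt_id t).smul_const w).const_add v
  have h := (hasFDerivAt_norm_rpow (v + t • w) hp).comp_hasDerivAt t hline
  simpa only [Function.comp_def, FunLike.coe_smul, Pi.smul_apply, innerSL_apply_apply, smul_eq_mul,
    mul_assoc] using h

theorem abs_norm_rpow_mul_inner_le (p : ℝ) (v w : H) :
    |‖v‖ ^ (p - 2) * ⟪v, w⟫| ≤ ‖v‖ ^ (p - 1) * ‖w‖ := by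
  rcases eq_or_ne v 0 with rfl | hv
  · simp only [inner_zero_left, mul_zero, abs_zero]
    positivity
  have hpow : ‖v‖ ^ (p - 2) * ‖v‖ = ‖v‖ ^ (p - 1) := by
    rw [← Real.rpow_add_one (norm_ne_zero_iff.mpr hv)]; ring_nf
  calc |‖v‖ ^ (p - 2) * ⟪v, w⟫| = ‖v‖ ^ (p - 2) * |⟪v, w⟫| := by
        rw [abs_mul, abs_of_nonneg (by positivity)]
    _ ≤ ‖v‖ ^ (p - 2) * (‖v‖ * ‖w‖) := by gcongr; exact abs_real_inner_le_norm v w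
    _ = ‖v‖ ^ (p - 1) * ‖w‖ := by rw [← hpow, mul_assoc]

theorem abs_norm_add_smul_rpow_mul_inner_le {p : ℝ} (hp : 1 ≤ p) (v w : H) {t : ℝ}
    (ht : |t| ≤ 1) :
    |‖v + t • w‖ ^ (p - 2) * ⟪v + t • w, w⟫| ≤ (‖v‖ + ‖w‖) ^ (p - 1) * ‖w‖ := by
  have hnorm : ‖v + t • w‖ ≤ ‖v‖ + ‖w‖ := calc
    ‖v + t • w‖ ≤ ‖v‖ + |t| * ‖w‖ := by simpa [norm_smul] using norm_add_le v (t • w)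
    _ ≤ ‖v‖ + ‖w‖ := by gcongr; exact mul_le_of_le_one_left (norm_nonneg w) ht
  refine (abs_norm_rpow_mul_inner_le p _ w).trans ?_
  gcongr

end NormRpow

section Energy

variable {X H : Type*} [MeasurableSpace X] {m : Measure X}
  [NormedAddCommGroup H] [InnerProductSpace ℝ H] {p : ℝ}

theorem MeasureTheory.MemLp.integrable_norm_rpow_sub_one_mul_norm {F G : Type*}
    [NormedAddCommGroup F] [NormedAddCommGroup G] {f : X → F} {g : X → G} (hp : 1 < p)
    (hf : MemLp f (ENNReal.ofReal p) m) (hg : MemLp g (ENNReal.ofReal p) m) :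
    Integrable (fun x => ‖f x‖ ^ (p - 1) * ‖g x‖) m := by
  have hpow : MemLp (fun x => ‖f x‖ ^ (p - 1)) (ENNReal.ofReal p.conjExponent) m := by
    have h := hf.norm_rpow_div (ENNReal.ofReal (p - 1))
    rwa [ENNReal.toReal_ofReal (by linarith), ← ENNReal.ofReal_div_of_pos (by linarith)] at h
  have := (Real.HolderConjugate.conjExponent hp).symm.ennrealOfReal
  exact hpow.integrable_mul hg.norm

theorem hasDerivAt_integral_norm_add_smul_rpow (hp : 1 < p) {a b : X → H}
    (ha : MemLp a (ENNReal.ofReal p) m) (hb : MemLp b (ENNReal.ofReal p) m) :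
    HasDerivAt (fun t : ℝ => ∫ x, ‖a x + t • b x‖ ^ p ∂m)
      (∫ x, p * (‖a x‖ ^ (p - 2) * ⟪a x, b x⟫) ∂m) 0 := by
  have hP : ENNReal.ofReal p ≠ 0 := (ENNReal.ofReal_pos.mpr (by linarith)).ne'
  have hmeas (t : ℝ) : AEStronglyMeasurable (fun x => a x + t • b x) m :=
    ha.1.add (hb.1.const_smul t)
  have hbound : Integrable (fun x => p * ((‖a x‖ + ‖b x‖) ^ (p - 1) * ‖b x‖)) m := by
    refine Integrable.const_mul ?_ p
    refine ((ha.norm.add hb.norm).integrable_norm_rpow_sub_one_mul_norm hp hb).congr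
      (ae_of_all _ fun x => ?_)
    simp only [Pi.add_apply,
      Real.norm_of_nonneg (add_nonneg (norm_nonneg (a x)) (norm_nonneg (b x)))]
  have key := hasDerivAt_integral_of_dominated_loc_of_deriv_le (ball_mem_nhds (0 : ℝ) one_pos)
    (F := fun t x => ‖a x + t • b x‖ ^ p)
    (F' := fun t x => p * (‖a x + t • b x‖ ^ (p - 2) * ⟪a x + t • b x, b x⟫))
    (Eventually.of_forall fun t => ((hmeas t).norm.aemeasurable.pow_const p).aestronglyMeasurable)
    (by simpa [ENNReal.toReal_ofReal (by linarith : 0 ≤ p)] using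
      ha.integrable_norm_rpow hP ENNReal.ofReal_ne_top)
    (((hmeas 0).norm.aemeasurable.pow_const _).mul ((hmeas 0).inner hb.1).aemeasurable
      |>.const_mul p).aestronglyMeasurable
    (ae_of_all _ fun x t ht => ?_) hbound
    (ae_of_all _ fun x t _ => hasDerivAt_norm_add_smul_rpow hp (a x) (b x) t)
  · simpa using key.2
  · rw [norm_mul, Real.norm_of_nonneg (by linarith), Real.norm_eq_abs]
    gcongr
    refine abs_norm_add_smul_rpow_mul_inner_le hp.le _ _ ?_
    simpa using (mem_ball_zero_iff.mp ht).le

end Energy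

theorem ContinuousLinearMap.coeFn_apply_add_smul {X E F : Type*} [MeasurableSpace X]
    {m : Measure X} [NormedAddCommGroup E] [NormedSpace ℝ E] [NormedAddCommGroup F]
    [NormedSpace ℝ F] {q : ℝ≥0∞} [Fact (1 ≤ q)] (T : E →L[ℝ] Lp F q m) (u φ : E) (t : ℝ) :
    T (u + t • φ) =ᵐ[m] fun x => T u x + t • T φ x := by
  rw [map_add, map_smul]
  filter_upwards [Lp.coeFn_add (T u) (t • T φ), Lp.coeFn_smul t (T φ)] with x hadd hsmul
  rw [hadd, Pi.add_apply, hsmul, Pi.smul_apply]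

theorem euler_lagrange_of_p_energy_minimizer_general
    {X H E : Type*} [MeasurableSpace X] (m : Measure X)
    [NormedAddCommGroup H] [InnerProductSpace ℝ H]
    [NormedAddCommGroup E] [NormedSpace ℝ E]
    (p : ℝ) (hp1 : 1 < p) [Fact (1 ≤ ENNReal.ofReal p)]
    (T : E →L[ℝ] Lp H (ENNReal.ofReal p) m)
    (S : Submodule ℝ E) (u : E)
    (hmin : ∀ φ ∈ S, ∫ x, ‖T u x‖ ^ p ∂m ≤ ∫ x, ‖T (u + φ) x‖ ^ p ∂m) :
    ∀ φ ∈ S,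
      ∫ x, (if T u x = 0 then (0 : ℝ)
        else ‖T u x‖ ^ (p - 2) * (inner ℝ (T u x) (T φ x) : ℝ)) ∂m = 0 := by
  intro φ hφ
  have hlocalMin : IsLocalMin (fun t : ℝ => ∫ x, ‖T u x + t • T φ x‖ ^ p ∂m) 0 := by
    refine Eventually.of_forall fun t => ?_
    have hcongr : ∫ x, ‖T (u + t • φ) x‖ ^ p ∂m = ∫ x, ‖T u x + t • T φ x‖ ^ p ∂m :=
      integral_congr_ae <| (T.coeFn_apply_add_smul u φ t).mono fun x hx => by simp only [hx]
    simpa only [zero_smul, add_zero, ← hcongr] using hmin _ (S.smul_mem t hφ)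
  have hzero := hlocalMin.hasDerivAt_eq_zero
    (hasDerivAt_integral_norm_add_smul_rpow hp1 (Lp.memLp (T u)) (Lp.memLp (T φ)))
  rw [integral_const_mul, mul_eq_zero, or_iff_right (by linarith)] at hzero
  refine (integral_congr_ae (ae_of_all _ fun x => ?_)).trans hzero
  split_ifs with hux <;> simp [hux]

theorem euler_lagrange_of_p_energy_minimizer
    {X H E : Type*} [MeasurableSpace X] (m : Measure X)
    [NormedAddCommGroup H] [InnerProductSpace ℝ H]
    [TopologicalSpace.SeparableSpace H]
    [NormedAddCommGroup E] [NormedSpace ℝ E]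
    (p : ℝ) (hp1 : 1 < p) [Fact (1 ≤ ENNReal.ofReal p)]
    (T : E →L[ℝ] Lp H (ENNReal.ofReal p) m)
    (S : Submodule ℝ E) (u : E)
    (hmin : ∀ φ ∈ S, ∫ x, ‖T u x‖ ^ p ∂m ≤ ∫ x, ‖T (u + φ) x‖ ^ p ∂m) :
    ∀ φ ∈ S,
      ∫ x, (if T u x = 0 then (0 : ℝ)
        else ‖T u x‖ ^ (p - 2) * (inner ℝ (T u x) (T φ x) : ℝ)) ∂m = 0 :=
  euler_lagrange_of_p_energy_minimizer_general m p hp1 T S u hmin
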